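/- The D-sampling process hits all but an insignificant mass of heavy cluster-leader sets: let n := |D| ≥ 3, ε ∈ (0, 1/12], let S ⊆ F be nonempty with cost(S) > 0, and let opt > 0 satisfy cost(S) ≤ 5·opt. Let μ be the probability distribution on D with μ(p) = d(p,S)/cost(S), and let s be an integer with s ≥ 5·((ln n)/ε⁵)·ln(5/ε²). Let 𝒞 be a collection of pairwise disjoint nonempty subsets of D and, for each C ∈ 𝒞, let L_C ⊆ C satisfy Σ_{p∈L_C} d(p,S) ≥ ε⁵·opt/ln n. If X₁, …, X_s are drawn independently from μ, then with probability at least 1−ε, the sum over those C ∈ 𝒞 with L_C ∩ {X₁,…,X_s} = ∅ of Σ_{p∈C} d(p,S) is at most ε·opt. -/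
import Mathlib


open Finset MeasureTheory

/-- `d(p,S)`: distance from `p` to the closest point of `S` (junk `0` if `S = ∅`). -/
noncomputable def dS {X : Type*} [MetricSpace X] (p : X) (S : Finset X) : ℝ :=
  if h : S.Nonempty then S.inf' h (fun c => dist p c) else 0

/-- `cost(S) = Σ_{p∈D} d(p,S)`. -/
noncomputable def kmCost {X : Type*} [MetricSpace X] (D S : Finset X) : ℝ :=
  ∑ p ∈ D, dS p S

/-- The D-sampling distribution on `D`: `μ(p) = d(p,S)/cost(S)`. -/
noncomputable def dSample {X : Type*} [MetricSpace X] [MeasurableSpace X]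
    (D S : Finset X) : Measure X :=
  ∑ p ∈ D, (ENNReal.ofReal (dS p S / kmCost D S)) • Measure.dirac p

open scoped ENNReal

lemma dS_nonneg {X : Type*} [MetricSpace X] (p : X) (S : Finset X) : 0 ≤ dS p S := by
  rw [dS]
  split
  · exact Finset.le_inf' _ _ fun c _ => dist_nonneg
  · exact le_refl 0

lemma kmCost_nonneg {X : Type*} [MetricSpace X] (D S : Finset X) : 0 ≤ kmCost D S :=
  Finset.sum_nonneg fun p _ => dS_nonneg p S

lemma dSample_finite {X : Type*} [MetricSpace X] [MeasurableSpace X]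
    (D S : Finset X) : IsFiniteMeasure (dSample D S) := by
  constructor
  rw [dSample, Measure.finset_sum_apply]
  simp only [Measure.smul_apply, smul_eq_mul, MeasureTheory.measure_univ, mul_one]
  exact ENNReal.sum_lt_top.2 fun _ _ => ENNReal.ofReal_lt_top

lemma pi_dSample_eq {X : Type*} [MetricSpace X] [MeasurableSpace X] [DecidableEq X]
    (D S : Finset X) (s : ℕ) :
    Measure.pi (fun _ : Fin s => dSample D S) =
      ∑ f ∈ Fintype.piFinset (fun _ : Fin s => D),
        (ENNReal.ofReal (∏ i, dS (f i) S / kmCost D S)) • Measure.dirac f := by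
  haveI := dSample_finite D S
  haveI : ∀ i : Fin s, SigmaFinite ((fun _ : Fin s => dSample D S) i) := fun i => inferInstance
  refine Measure.pi_eq fun t ht => ?_
  rw [Measure.finset_sum_apply]
  have hmeas : MeasurableSet (Set.pi Set.univ t) := MeasurableSet.univ_pi ht
  simp only [Measure.smul_apply, smul_eq_mul, Measure.dirac_apply' _ hmeas]
  have key : ∀ f : Fin s → X,
      ENNReal.ofReal (∏ i, dS (f i) S / kmCost D S) *
          (Set.pi Set.univ t).indicator (1 : (Fin s → X) → ℝ≥0∞) f
        = ∏ i, (ENNReal.ofReal (dS (f i) S / kmCost D S)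
            * (t i).indicator (1 : X → ℝ≥0∞) (f i)) := by
    intro f
    rw [Finset.prod_mul_distrib,
      ENNReal.ofReal_prod_of_nonneg (fun i _ => div_nonneg (dS_nonneg _ _) (kmCost_nonneg D S))]
    congr 1
    by_cases hf : f ∈ Set.pi Set.univ t
    · rw [Set.indicator_of_mem hf]
      rw [Set.mem_univ_pi] at hf
      simp [Set.indicator_of_mem, hf]
    · rw [Set.indicator_of_notMem hf]
      rw [Set.mem_univ_pi] at hf
      push_neg at hf
      obtain ⟨i, hi⟩ := hf
      rw [eq_comm, Finset.prod_eq_zero (Finset.mem_univ i)]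
      simp [Set.indicator_of_notMem hi]
  simp only [key]
  rw [Finset.sum_prod_piFinset D (fun i p => ENNReal.ofReal (dS p S / kmCost D S) * (t i).indicator 1 p)]
  refine Finset.prod_congr rfl fun i _ => ?_
  rw [dSample, Measure.finset_sum_apply]
  simp only [Measure.smul_apply, smul_eq_mul, Measure.dirac_apply' _ (ht i)]

/-- The D-sampling process hits all but an insignificant mass of heavy cluster-leader
sets: if `s ≥ 5·((ln n)/ε⁵)·ln(5/ε²)` points `X₁,…,X_s` are sampled i.i.d. with
probability proportional to `d(p,S)`, then with probability at least `1−ε`, the total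
`S`-cost of the clusters `C ∈ 𝒞` whose leader set `L_C` is missed is at most `ε·opt`. -/
theorem d_sampling_hits_heavy_clusters {X : Type*} [MetricSpace X] [MeasurableSpace X]
    [DecidableEq X]
    (D F S : Finset X) (hD3 : 3 ≤ D.card) (hSF : S ⊆ F) (hSne : S.Nonempty)
    (hcostpos : 0 < kmCost D S)
    (opt : ℝ) (hopt : 0 < opt) (h5 : kmCost D S ≤ 5 * opt)
    (ε : ℝ) (hε0 : 0 < ε) (hε1 : ε ≤ 1 / 12)
    (s : ℕ) (hs : 5 * (Real.log D.card / ε ^ 5) * Real.log (5 / ε ^ 2) ≤ (s : ℝ))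
    (𝒞 : Finset (Finset X))
    (h𝒞 : ∀ C ∈ 𝒞, C.Nonempty ∧ C ⊆ D)
    (hdisj : ∀ C ∈ 𝒞, ∀ C' ∈ 𝒞, C ≠ C' → Disjoint C C')
    (L : Finset X → Finset X)
    (hL : ∀ C ∈ 𝒞, L C ⊆ C ∧ ε ^ 5 * opt / Real.log D.card ≤ ∑ p ∈ L C, dS p S) :
    ENNReal.ofReal (1 - ε) ≤
      Measure.pi (fun _ : Fin s => dSample D S)
        {ω : Fin s → X |
          ∑ C ∈ 𝒞.filter (fun C => ∀ i : Fin s, ω i ∉ L C), ∑ p ∈ C, dS p S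
            ≤ ε * opt} := by
  classical
  set Φ : Finset (Fin s → X) := Fintype.piFinset (fun _ : Fin s => D) with hΦ
  have hvnn : ∀ p : X, 0 ≤ dS p S / kmCost D S :=
    fun p => div_nonneg (dS_nonneg p S) (kmCost_nonneg D S)
  set v : X → ℝ := fun p => dS p S / kmCost D S with hv
  set c : (Fin s → X) → ℝ := fun f => ∏ i, v (f i) with hc
  have hcnn : ∀ f, 0 ≤ c f := fun f => Finset.prod_nonneg fun i _ => hvnn _
  have hsum1 : ∑ p ∈ D, v p = 1 := by
    simp only [hv]
    rw [← Finset.sum_div, ← kmCost]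
    exact div_self hcostpos.ne'
  have hcsum : ∑ f ∈ Φ, c f = 1 := by
    simp only [hc, hΦ]
    rw [Finset.sum_prod_piFinset D (fun _ p => v p), hsum1]
    simp
  -- log n > 1
  have hLn : 1 < Real.log D.card := by
    have h3 : (3:ℝ) ≤ (D.card : ℝ) := by exact_mod_cast hD3
    have he3 : Real.exp 1 < 3 := by
      have := Real.exp_one_lt_d9
      linarith
    calc (1:ℝ) = Real.log (Real.exp 1) := (Real.log_exp 1).symm
      _ < Real.log 3 := Real.log_lt_log (Real.exp_pos 1) he3
      _ ≤ Real.log D.card := Real.log_le_log (by norm_num) h3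
  have hLnpos : 0 < Real.log D.card := by linarith
  have hεpow : 0 < ε ^ 5 := pow_pos hε0 5
  have hε2 : (1:ℝ) ≤ 5 / ε ^ 2 := by
    rw [le_div_iff₀ (by positivity)]
    nlinarith
  have hL2 : 0 ≤ Real.log (5 / ε ^ 2) := Real.log_nonneg hε2
  set costC : Finset X → ℝ := fun C => ∑ p ∈ C, dS p S with hcostC
  have hcostCnn : ∀ C, 0 ≤ costC C := fun C => Finset.sum_nonneg fun p _ => dS_nonneg p S
  -- per-cluster miss probability
  have hmiss : ∀ C ∈ 𝒞, ∑ f ∈ Φ.filter (fun f => ∀ i, f i ∉ L C), c f ≤ ε ^ 2 / 5 := by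
    intro C hC
    obtain ⟨hLC, hheavy⟩ := hL C hC
    have hLD : L C ⊆ D := hLC.trans (h𝒞 C hC).2
    set q : ℝ := ∑ p ∈ L C, v p with hq
    have hq1 : q ≤ 1 := by
      rw [hq, ← hsum1]
      exact Finset.sum_le_sum_of_subset_of_nonneg hLD (fun p _ _ => hvnn p)
    have hqlb : ε ^ 5 / (5 * Real.log D.card) ≤ q := by
      have hqval : q = (∑ p ∈ L C, dS p S) / kmCost D S := by
        rw [hq]
        simp only [hv]
        rw [Finset.sum_div]
      rw [hqval, div_le_div_iff₀ (by positivity) hcostpos]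
      have hh : ε ^ 5 * opt ≤ (∑ p ∈ L C, dS p S) * Real.log D.card :=
        (div_le_iff₀ hLnpos).1 hheavy
      nlinarith [mul_le_mul_of_nonneg_left h5 hεpow.le]
    have hfilter : Φ.filter (fun f => ∀ i, f i ∉ L C)
        = Fintype.piFinset (fun _ : Fin s => D \ L C) := by
      ext f
      simp only [hΦ, Finset.mem_filter, Fintype.mem_piFinset, Finset.mem_sdiff]
      constructor
      · rintro ⟨h1, h2⟩ i; exact ⟨h1 i, h2 i⟩
      · intro h; exact ⟨fun i => (h i).1, fun i => (h i).2⟩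
    have hsumval : ∑ f ∈ Φ.filter (fun f => ∀ i, f i ∉ L C), c f = (1 - q) ^ s := by
      rw [hfilter]
      simp only [hc]
      rw [Finset.sum_prod_piFinset (D \ L C) (fun _ p => v p)]
      rw [Finset.sum_sdiff_eq_sub hLD, hsum1, ← hq]
      simp
    rw [hsumval]
    have h1qnn : 0 ≤ 1 - q := by linarith
    have h1q : 1 - q ≤ Real.exp (-q) := by linarith [Real.add_one_le_exp (-q)]
    have hqs : Real.log (5 / ε ^ 2) ≤ q * s := by
      have hkey : Real.log (5 / ε ^ 2) ≤ (ε ^ 5 / (5 * Real.log D.card)) * s := by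
        rw [div_mul_eq_mul_div, le_div_iff₀ (by positivity)]
        have h1 := mul_le_mul_of_nonneg_left hs hεpow.le
        have heq : ε ^ 5 * (5 * (Real.log D.card / ε ^ 5) * Real.log (5 / ε ^ 2))
            = 5 * Real.log D.card * Real.log (5 / ε ^ 2) := by
          field_simp
        rw [heq] at h1
        linarith
      refine hkey.trans ?_
      exact mul_le_mul_of_nonneg_right hqlb (Nat.cast_nonneg s)
    calc (1 - q) ^ s ≤ (Real.exp (-q)) ^ s := pow_le_pow_left₀ h1qnn h1q s
      _ = Real.exp (-(q * s)) := by
          rw [← Real.exp_nat_mul]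
          congr 1
          ring
      _ ≤ Real.exp (-(Real.log (5 / ε ^ 2))) := Real.exp_le_exp.2 (by linarith)
      _ = ε ^ 2 / 5 := by
          rw [Real.exp_neg, Real.exp_log (by positivity)]
          rw [inv_div]
  -- total cluster cost ≤ kmCost
  have hcostsum : ∑ C ∈ 𝒞, costC C ≤ kmCost D S := by
    have hdisj' : (↑𝒞 : Set (Finset X)).PairwiseDisjoint id :=
      fun C hC C' hC' hne => hdisj C hC C' hC' hne
    simp only [hcostC]
    have hbi : ∑ p ∈ 𝒞.biUnion id, dS p S = ∑ C ∈ 𝒞, ∑ p ∈ C, dS p S :=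
      Finset.sum_biUnion hdisj'
    rw [← hbi, kmCost]
    refine Finset.sum_le_sum_of_subset_of_nonneg ?_ (fun p _ _ => dS_nonneg p S)
    intro p hp
    rw [Finset.mem_biUnion] at hp
    obtain ⟨C, hC, hpC⟩ := hp
    exact (h𝒞 C hC).2 hpC
  -- expected missed cost
  set Y : (Fin s → X) → ℝ :=
    fun f => ∑ C ∈ 𝒞.filter (fun C => ∀ i, f i ∉ L C), costC C with hY
  have hYnn : ∀ f, 0 ≤ Y f := fun f => Finset.sum_nonneg fun C _ => hcostCnn C
  have hE : ∑ f ∈ Φ, c f * Y f ≤ ε ^ 2 * opt := by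
    have swap : ∑ f ∈ Φ, c f * Y f
        = ∑ C ∈ 𝒞, costC C * ∑ f ∈ Φ.filter (fun f => ∀ i, f i ∉ L C), c f := by
      simp only [hY, Finset.sum_filter, Finset.mul_sum, mul_ite, mul_zero, ite_mul, zero_mul]
      rw [Finset.sum_comm]
      refine Finset.sum_congr rfl fun C _ => Finset.sum_congr rfl fun f _ => ?_
      by_cases h : ∀ i, f i ∉ L C <;> simp [h, mul_comm]
    rw [swap]
    calc ∑ C ∈ 𝒞, costC C * ∑ f ∈ Φ.filter (fun f => ∀ i, f i ∉ L C), c f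
        ≤ ∑ C ∈ 𝒞, costC C * (ε ^ 2 / 5) :=
          Finset.sum_le_sum fun C hC => mul_le_mul_of_nonneg_left (hmiss C hC) (hcostCnn C)
      _ = (∑ C ∈ 𝒞, costC C) * (ε ^ 2 / 5) := by rw [Finset.sum_mul]
      _ ≤ (5 * opt) * (ε ^ 2 / 5) :=
          mul_le_mul_of_nonneg_right (hcostsum.trans h5) (by positivity)
      _ = ε ^ 2 * opt := by ring
  -- Markov
  set goodP : (Fin s → X) → Prop := fun f => Y f ≤ ε * opt with hgoodP
  have hbad : ∑ f ∈ Φ.filter (fun f => ¬ goodP f), c f ≤ ε := by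
    have h1 : ε * opt * ∑ f ∈ Φ.filter (fun f => ¬ goodP f), c f
        ≤ ∑ f ∈ Φ.filter (fun f => ¬ goodP f), c f * Y f := by
      rw [Finset.mul_sum]
      refine Finset.sum_le_sum fun f hf => ?_
      rw [Finset.mem_filter] at hf
      have hfY : ε * opt ≤ Y f := le_of_lt (lt_of_not_ge hf.2)
      calc ε * opt * c f = c f * (ε * opt) := by ring
        _ ≤ c f * Y f := mul_le_mul_of_nonneg_left hfY (hcnn f)
    have h2 : ∑ f ∈ Φ.filter (fun f => ¬ goodP f), c f * Y f ≤ ∑ f ∈ Φ, c f * Y f :=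
      Finset.sum_le_sum_of_subset_of_nonneg (Finset.filter_subset _ _)
        (fun f _ _ => mul_nonneg (hcnn f) (hYnn f))
    have h3 : ε * opt * ∑ f ∈ Φ.filter (fun f => ¬ goodP f), c f ≤ ε * opt * ε := by
      calc ε * opt * ∑ f ∈ Φ.filter (fun f => ¬ goodP f), c f
          ≤ ε ^ 2 * opt := h1.trans (h2.trans hE)
        _ = ε * opt * ε := by ring
    exact le_of_mul_le_mul_left h3 (by positivity)
  have hgood : 1 - ε ≤ ∑ f ∈ Φ.filter goodP, c f := by
    have hsplit := Finset.sum_filter_add_sum_filter_not Φ goodP c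
    rw [hcsum] at hsplit
    linarith
  -- conclude in ENNReal
  set G : Set (Fin s → X) :=
    {ω : Fin s → X |
      ∑ C ∈ 𝒞.filter (fun C => ∀ i : Fin s, ω i ∉ L C), ∑ p ∈ C, dS p S ≤ ε * opt} with hG
  rw [pi_dSample_eq D S s, Measure.finset_sum_apply]
  simp only [Measure.smul_apply, smul_eq_mul]
  have hmem : ∀ f, goodP f → f ∈ G := by
    intro f hf
    simp only [hG, Set.mem_setOf_eq]
    simpa only [hgoodP, hY, hcostC] using hf
  calc ENNReal.ofReal (1 - ε)
      ≤ ENNReal.ofReal (∑ f ∈ Φ.filter goodP, c f) := ENNReal.ofReal_le_ofReal hgood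
    _ = ∑ f ∈ Φ.filter goodP, ENNReal.ofReal (c f) :=
        ENNReal.ofReal_sum_of_nonneg (fun f _ => hcnn f)
    _ = ∑ f ∈ Φ.filter goodP, ENNReal.ofReal (c f) * Measure.dirac f G := by
        refine Finset.sum_congr rfl fun f hf => ?_
        rw [Finset.mem_filter] at hf
        rw [Measure.dirac_apply_of_mem (hmem f hf.2), mul_one]
    _ ≤ ∑ f ∈ Φ, ENNReal.ofReal (c f) * Measure.dirac f G :=
        Finset.sum_le_sum_of_subset (Finset.filter_subset _ _)
    _ = ∑ f ∈ Φ, ENNReal.ofReal (∏ i, dS (f i) S / kmCost D S) * Measure.dirac f G := by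
        simp only [hc, hv]
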